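/- Let Ω : ℝ³ → ℝ be continuously differentiable, let β ∈ (0, 1], and let O ∈ ℝ be such that |∇Ω(q)| ≤ β for every q ∈ ℝ³ with Ω(q) ≤ O. Define E₀(P) := inf_{k ∈ ℝ³} (Ω(P − k) + |k|). Then for every P ∈ ℝ³ with Ω(P) ≤ O and every k ∈ ℝ³ one has E₀(P − k) + |k| − E₀(P) ≥ (1 − β)·|k|. -/

import Mathlib

/-!
Along any ray from a point `q` of the sublevel set `{Ω ≤ O}`, the function can only decrease
at slope at most `β` for as long as it stays below `Ω q`, so `Ω (q + v) ≥ Ω q - β ‖v‖`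
(a barrier argument against the line of slope `-β`). With `β ≤ 1` this gives
`E₀(P) = Ω(P)` for `P` in the sublevel set, and `E₀(P - k) ≥ Ω(P) - β ‖k‖` by the triangle
inequality.
-/

open Set

theorem norm_gradient_eq_norm_fderiv {F : Type*} [NormedAddCommGroup F] [InnerProductSpace ℝ F]
    [CompleteSpace F] (f : F → ℝ) (x : F) : ‖gradient f x‖ = ‖fderiv ℝ f x‖ :=
  (InnerProductSpace.toDual ℝ F).symm.norm_map _

theorem sub_mul_norm_le_of_norm_fderiv_le_on_sublevel {E : Type*} [NormedAddCommGroup E]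
    [NormedSpace ℝ E] {f : E → ℝ} (hf : Differentiable ℝ f) {C O : ℝ}
    (hC : ∀ z, f z ≤ O → ‖fderiv ℝ f z‖ ≤ C) {x : E} (hx : f x ≤ O) (y : E) :
    f x - C * ‖y - x‖ ≤ f y := by
  have hC0 : 0 ≤ C := (norm_nonneg _).trans (hC x hx)
  set v := y - x
  refine le_of_forall_pos_le_add fun ε hε => ?_
  have hg : ∀ t : ℝ, HasDerivAt (fun t => f (x + t • v)) (fderiv ℝ f (x + t • v) v) t := by
    intro t
    have hline : HasDerivAt (fun t : ℝ => x + t • v) v t := by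
      simpa using ((hasDerivAt_id t).smul_const v).const_add x
    exact (hf _).hasFDerivAt.comp_hasDerivAt t hline
  -- Fence `t ↦ -f (x + t • v)` by the line of slope `C ‖v‖ + ε` through `-f x`: where the two
  -- touch, `f (x + t • v) ≤ f x ≤ O`, so the derivative bound is available.
  have fence := image_le_of_deriv_right_lt_deriv_boundary (a := 0) (b := 1)
    (f := fun t => -f (x + t • v)) (B := fun t => -f x + (C * ‖v‖ + ε) * t)
    (fun t _ => (hg t).continuousAt.neg.continuousWithinAt)
    (fun t _ => (hg t).neg.hasDerivWithinAt) (by simp)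
    (fun t => by simpa using ((hasDerivAt_id t).const_mul (C * ‖v‖ + ε)).const_add (-f x))
    (fun t ht htouch => by
      have hz : f (x + t • v) ≤ O := by
        have : 0 ≤ (C * ‖v‖ + ε) * t := by have := ht.1; positivity
        linarith
      calc -(fderiv ℝ f (x + t • v)) v
          ≤ ‖fderiv ℝ f (x + t • v)‖ * ‖v‖ := (neg_le_abs _).trans ((fderiv ℝ f _).le_opNorm v)
        _ ≤ C * ‖v‖ := by gcongr; exact hC _ hz
        _ < C * ‖v‖ + ε := by linarith)
    (right_mem_Icc.2 zero_le_one)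
  simp only [one_smul, mul_one, v, add_sub_cancel] at fence
  linarith

section

variable {E : Type*} [SeminormedAddCommGroup E] {f : E → ℝ} {x : E} {C : ℝ}
  (hC0 : 0 ≤ C) (hC1 : C ≤ 1) (h : ∀ y, f x - C * ‖y - x‖ ≤ f y)
include hC0 hC1 h

theorem sub_mul_norm_le_comp_sub_sub_add_norm (a k : E) :
    f x - C * ‖a‖ ≤ f (x - a - k) + ‖k‖ := by
  have hfar := h (x - a - k)
  rw [show x - a - k - x = -(a + k) by abel, norm_neg] at hfar
  nlinarith [norm_add_le a k, norm_nonneg k]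

theorem ciInf_comp_sub_add_norm_eq_self : ⨅ k, f (x - k) + ‖k‖ = f x := by
  have hle (k : E) : f x ≤ f (x - k) + ‖k‖ := by
    simpa using sub_mul_norm_le_comp_sub_sub_add_norm hC0 hC1 h 0 k
  refine le_antisymm ?_ (le_ciInf hle)
  simpa using ciInf_le ⟨f x, forall_mem_range.2 hle⟩ (0 : E)

theorem sub_mul_norm_le_ciInf_comp_sub_sub_add_norm (a : E) :
    f x - C * ‖a‖ ≤ ⨅ k, f (x - a - k) + ‖k‖ :=
  le_ciInf (sub_mul_norm_le_comp_sub_sub_add_norm hC0 hC1 h a)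

end

/-- Let `Ω : ℝ³ → ℝ` be `C¹`, `β ∈ (0, 1]`, and `|∇Ω| ≤ β` on the sublevel
set `{Ω ≤ O}`. With `E₀(P) := inf_k (Ω(P - k) + |k|)`, for every `P` with `Ω(P) ≤ O` and
every `k` one has `E₀(P - k) + |k| - E₀(P) ≥ (1 - β)·|k|`. -/
theorem statement8 (Ω : EuclideanSpace ℝ (Fin 3) → ℝ) (hΩ : ContDiff ℝ 1 Ω)
    (β : ℝ) (hβ0 : 0 < β) (hβ1 : β ≤ 1) (O : ℝ)
    (hgrad : ∀ q : EuclideanSpace ℝ (Fin 3), Ω q ≤ O → ‖gradient Ω q‖ ≤ β) :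
    ∀ P : EuclideanSpace ℝ (Fin 3), Ω P ≤ O →
      ∀ k : EuclideanSpace ℝ (Fin 3),
        (⨅ k' : EuclideanSpace ℝ (Fin 3), (Ω (P - k - k') + ‖k'‖)) + ‖k‖
          - (⨅ k' : EuclideanSpace ℝ (Fin 3), (Ω (P - k') + ‖k'‖)) ≥ (1 - β) * ‖k‖ := by
  intro P hP k
  have hslope : ∀ y, Ω P - β * ‖y - P‖ ≤ Ω y :=
    sub_mul_norm_le_of_norm_fderiv_le_on_sublevel (hΩ.differentiable one_ne_zero)
      (fun z hz => norm_gradient_eq_norm_fderiv Ω z ▸ hgrad z hz) hP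
  rw [ciInf_comp_sub_add_norm_eq_self hβ0.le hβ1 hslope]
  linarith [sub_mul_norm_le_ciInf_comp_sub_sub_add_norm hβ0.le hβ1 hslope k]
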